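/- Let j ≥ 1 be an integer and let (a^{(n)})_{n≥0} be complex numbers. Suppose there are nonzero complex numbers u_1, …, u_j with |u_1| > |u_2| > … > |u_j|, nonzero complex constants c_1, …, c_j, reals ϱ with 0 < ϱ < |u_j| and μ > 0, and a sequence (b^{(n)})_{n≥0} with |b^{(n)}| ≤ μ ϱ^n, such that a^{(n)} = Σ_{ℓ=1}^{j} c_ℓ u_ℓ^{n+1} + b^{(n)} for all n ≥ 0. Then there exist a constant c_j' (independent of n) and K > 0 such that |H_j^{(n)} − c_j' (u_1 u_2 ⋯ u_j)^n| ≤ K (|u_1 u_2 ⋯ u_{j−1}| ϱ)^n for all n ≥ 0. -/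

import Mathlib

/-!
Let `V = (u_k ^ s)` be the Vandermonde matrix, `Λ = diag u` and `C = diag (c_k u_k)`. The Hankel
matrix of the power sums is `Vᵀ Λⁿ C V`, so adding the Hankel matrix `B_n` of the remainder gives
`Vᵀ Λⁿ (C + Z_n) V` with `Z_n = Λ⁻ⁿ V⁻ᵀ B_n V⁻¹`, whence
`H_j^{(n)} = det V ^ 2 (u_1 ⋯ u_j) ^ n det (C + Z_n)` and `c_j' = det V ^ 2 det C`.
In the ℓ∞ operator norm `‖Λ⁻ⁿ‖ ≤ |u_j|⁻ⁿ` and `‖B_n‖ = O(ϱⁿ)`, so `Z_n = O((ϱ / |u_j|)ⁿ)` tends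
to `0`, and since `det` is differentiable at `C`, `det (C + Z_n) - det C = O(Z_n)`.
-/

/-- The Hankel determinant: `H_0^{(n)} = 1` and for `j ≥ 1`,
`H_j^{(n)} = det (a^{(n+s+ℓ)})_{s,ℓ = 0,…,j-1}`. -/
noncomputable def hankel (a : ℕ → ℂ) (j n : ℕ) : ℂ :=
  Matrix.det (Matrix.of fun s ℓ : Fin j => a (n + (s : ℕ) + (ℓ : ℕ)))

open Finset Matrix Asymptotics Filter Topology
open scoped Matrix.Norms.Operator

namespace Matrix

section Analysis

variable {m n α : Type*} [Fintype m] [Fintype n] [SeminormedAddCommGroup α]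

theorem linfty_opNorm_le_sum_norm (A : Matrix m n α) : ‖A‖ ≤ ∑ i, ∑ k, ‖A i k‖ := by
  rw [linfty_opNorm_def]
  have hcoe : ∑ i, ∑ k, ‖A i k‖ = ((∑ i, ∑ k, ‖A i k‖₊ : NNReal) : ℝ) := by push_cast; rfl
  rw [hcoe, NNReal.coe_le_coe]
  exact Finset.sup_le fun i _ => single_le_sum (f := fun i => ∑ k, ‖A i k‖₊) (by simp) (mem_univ i)

theorem isBigO_of_forall_isBigO_apply {ι : Type*} {l : Filter ι} {A : ι → Matrix m n α}
    {g : ι → ℝ} (h : ∀ i k, (fun x => A x i k) =O[l] g) : A =O[l] g :=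
  (isBigO_of_le l fun x => (linfty_opNorm_le_sum_norm (A x)).trans (le_abs_self _)).trans
    (IsBigO.fun_sum fun i _ => IsBigO.fun_sum fun k _ => (h i k).norm_left)

variable {𝕜 : Type*} [NontriviallyNormedField 𝕜] [CompleteSpace 𝕜] [DecidableEq n]

theorem differentiable_det : Differentiable 𝕜 (det : Matrix n n 𝕜 → 𝕜) := by
  have hentry : ∀ i k : n, Differentiable 𝕜 (fun M : Matrix n n 𝕜 => M i k) := fun i k =>
    (LinearMap.toContinuousLinearMap (entryLinearMap 𝕜 𝕜 i k)).differentiable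
  have hexpand : (det : Matrix n n 𝕜 → 𝕜) =
      fun M => ∑ σ : Equiv.Perm n, Equiv.Perm.sign σ • ∏ i, M (σ i) i :=
    funext det_apply
  rw [hexpand]
  fun_prop

theorem isBigO_det_add_sub_det {ι : Type*} {l : Filter ι} (C : Matrix n n 𝕜)
    {Z : ι → Matrix n n 𝕜} (hZ : Tendsto Z l (𝓝 0)) :
    (fun x => det (C + Z x) - det C) =O[l] Z := by
  have hCZ : Tendsto (fun x => C + Z x) l (𝓝 C) := by
    simpa using (tendsto_const_nhds (x := C)).add hZ
  simpa [Function.comp_def] using (differentiable_det C).isBigO_sub.comp_tendsto hCZ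

end Analysis
end Matrix

def hankelMatrix {α : Type*} (a : ℕ → α) (j n : ℕ) : Matrix (Fin j) (Fin j) α :=
  of fun s ℓ => a (n + s + ℓ)

theorem hankel_eq_det_hankelMatrix (a : ℕ → ℂ) (j n : ℕ) :
    hankel a j n = (hankelMatrix a j n).det :=
  rfl

theorem hankelMatrix_add {α : Type*} [Add α] (a b : ℕ → α) (j n : ℕ) :
    hankelMatrix (a + b) j n = hankelMatrix a j n + hankelMatrix b j n :=
  rfl

theorem hankelMatrix_powerSum {R : Type*} [CommRing R] {j : ℕ} (u c : Fin j → R) (n : ℕ) :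
    hankelMatrix (fun m => ∑ k, c k * u k ^ (m + 1)) j n =
      (vandermonde u)ᵀ * diagonal (fun k => u k ^ n) * diagonal (fun k => c k * u k) *
        vandermonde u := by
  rw [Matrix.mul_assoc _ (diagonal _) (diagonal _), diagonal_mul_diagonal]
  ext s ℓ
  simp only [hankelMatrix, of_apply, mul_apply (M := _ * diagonal _), mul_diagonal,
    transpose_apply, vandermonde_apply]
  refine sum_congr rfl fun k _ => ?_
  ring

section Algebra

variable {K : Type*} [Field K] {j : ℕ}

noncomputable def normalizedPerturbation (u : Fin j → K) (b : ℕ → K) (n : ℕ) :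
    Matrix (Fin j) (Fin j) K :=
  diagonal (fun k => (u k ^ n)⁻¹) * ((vandermonde u)ᵀ)⁻¹ * hankelMatrix b j n * (vandermonde u)⁻¹

theorem hankelMatrix_powerSum_add {u : Fin j → K} (hu : ∀ k, u k ≠ 0)
    (hinj : Function.Injective u) (c : Fin j → K) (b : ℕ → K) (n : ℕ) :
    hankelMatrix (fun m => ∑ k, c k * u k ^ (m + 1) + b m) j n =
      (vandermonde u)ᵀ * diagonal (fun k => u k ^ n) *
        (diagonal (fun k => c k * u k) + normalizedPerturbation u b n) * vandermonde u := by
  have hV : IsUnit (vandermonde u).det := (det_vandermonde_ne_zero_iff.2 hinj).isUnit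
  have hVT : IsUnit (vandermonde u)ᵀ.det := by rwa [det_transpose]
  have hΛ : diagonal (fun k => u k ^ n) * diagonal (fun k => (u k ^ n)⁻¹) = 1 := by
    rw [diagonal_mul_diagonal, ← diagonal_one]
    exact congrArg diagonal (funext fun k => mul_inv_cancel₀ (pow_ne_zero n (hu k)))
  rw [show (fun m => ∑ k, c k * u k ^ (m + 1) + b m) = (fun m => ∑ k, c k * u k ^ (m + 1)) + b
    from rfl, hankelMatrix_add, hankelMatrix_powerSum, mul_add, add_mul, normalizedPerturbation]
  congr 1
  simp only [Matrix.mul_assoc]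
  rw [← Matrix.mul_assoc (diagonal _), hΛ, Matrix.one_mul, mul_nonsing_inv_cancel_left _ _ hVT,
    nonsing_inv_mul _ hV, Matrix.mul_one]

theorem det_hankelMatrix_powerSum_add {u : Fin j → K} (hu : ∀ k, u k ≠ 0)
    (hinj : Function.Injective u) (c : Fin j → K) (b : ℕ → K) (n : ℕ) :
    (hankelMatrix (fun m => ∑ k, c k * u k ^ (m + 1) + b m) j n).det =
      (vandermonde u).det ^ 2 * (∏ k, u k) ^ n *
        (diagonal (fun k => c k * u k) + normalizedPerturbation u b n).det := by
  rw [hankelMatrix_powerSum_add hu hinj, det_mul, det_mul, det_mul, det_transpose, det_diagonal,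
    prod_pow]
  ring

end Algebra

section Asymptotics

variable {𝕜 : Type*} [NormedField 𝕜] {j : ℕ}

theorem isBigO_hankelMatrix {b : ℕ → 𝕜} {ϱ : ℝ} (hb : b =O[atTop] (ϱ ^ ·)) :
    (hankelMatrix b j ·) =O[atTop] (ϱ ^ ·) := by
  refine isBigO_of_forall_isBigO_apply fun s ℓ => ?_
  have hshift : (fun n => b (n + (s + ℓ))) =O[atTop] fun n => ϱ ^ (s + ℓ : ℕ) * ϱ ^ n := by
    simpa [Function.comp_def, pow_add, mul_comm] using
      hb.comp_tendsto (tendsto_add_atTop_nat (s + ℓ))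
  simpa [hankelMatrix, Nat.add_assoc] using hshift.trans (isBigO_const_mul_self _ _ _)

theorem isBigO_normalizedPerturbation {u : Fin j → 𝕜} {b : ℕ → 𝕜} {r ϱ : ℝ} (hr : 0 < r)
    (hmin : ∀ k, r ≤ ‖u k‖) (hb : b =O[atTop] (ϱ ^ ·)) :
    normalizedPerturbation u b =O[atTop] fun n => (ϱ / r) ^ n := by
  have hΛ : (fun n => diagonal fun k => (u k ^ n)⁻¹) =O[atTop] (r⁻¹ ^ ·) := by
    refine IsBigO.of_norm_le fun n => ?_
    rw [linfty_opNorm_diagonal, pi_norm_le_iff_of_nonneg (by positivity)]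
    intro k
    rw [norm_inv, norm_pow, ← inv_pow]
    exact pow_le_pow_left₀ (by positivity) (inv_anti₀ hr (hmin k)) n
  have hconst (M : Matrix (Fin j) (Fin j) 𝕜) : (fun _ : ℕ => M) =O[atTop] fun _ => (1 : ℝ) :=
    isBigO_const_const M one_ne_zero atTop
  refine (((hΛ.mul (hconst _)).mul (isBigO_hankelMatrix hb)).mul (hconst _)).congr_right
    fun n => ?_
  rw [div_pow, div_eq_mul_inv, inv_pow]
  ring

end Asymptotics

theorem isBigO_det_hankelMatrix_powerSum_add_sub {𝕜 : Type*} [NontriviallyNormedField 𝕜]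
    [CompleteSpace 𝕜] {j : ℕ} {u : Fin j → 𝕜} {b : ℕ → 𝕜} {r ϱ : ℝ}
    (hinj : Function.Injective u) (hmin : ∀ k, r ≤ ‖u k‖) (hϱ : |ϱ| < r)
    (hb : b =O[atTop] (ϱ ^ ·)) (c : Fin j → 𝕜) :
    (fun n => (hankelMatrix (fun m => ∑ k, c k * u k ^ (m + 1) + b m) j n).det -
        (vandermonde u).det ^ 2 * (diagonal fun k => c k * u k).det * (∏ k, u k) ^ n) =O[atTop]
      fun n => (‖∏ k, u k‖ * (ϱ / r)) ^ n := by
  have hr : 0 < r := (abs_nonneg ϱ).trans_lt hϱ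
  have hu : ∀ k, u k ≠ 0 := fun k => norm_pos_iff.1 (hr.trans_le (hmin k))
  have hZ := isBigO_normalizedPerturbation hr hmin hb
  have hZ0 : Tendsto (normalizedPerturbation u b) atTop (𝓝 0) := hZ.trans_tendsto <|
    tendsto_pow_atTop_nhds_zero_of_abs_lt_one (by rwa [abs_div, abs_of_pos hr, div_lt_one hr])
  have hdet := (isBigO_det_add_sub_det (diagonal fun k => c k * u k) hZ0).trans hZ
  refine ((isBigO_const_mul_self ((vandermonde u).det ^ 2) (fun n => (∏ k, u k) ^ n)
    atTop).norm_right.mul hdet).congr (fun n => ?_) fun n => ?_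
  · rw [det_hankelMatrix_powerSum_add hu hinj]
    ring
  · rw [norm_pow, mul_pow]

theorem hankel_asymptotic
    (j : ℕ) (hj : 1 ≤ j)
    (a b : ℕ → ℂ)
    (u c : Fin j → ℂ) (ϱ μ : ℝ)
    (hudec : ∀ ℓ₁ ℓ₂ : Fin j, ℓ₁ < ℓ₂ → ‖u ℓ₂‖ < ‖u ℓ₁‖)
    (hϱpos : 0 < ϱ) (hϱlt : ϱ < ‖u ⟨j - 1, by omega⟩‖)
    (hb : ∀ n : ℕ, ‖b n‖ ≤ μ * ϱ ^ n)
    (ha : ∀ n : ℕ, a n = (∑ ℓ, c ℓ * u ℓ ^ (n + 1)) + b n) :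
    ∃ c' : ℂ, ∃ K > 0, ∀ n : ℕ,
      ‖hankel a j n - c' * (∏ ℓ, u ℓ) ^ n‖ ≤
        K * ((∏ ℓ ∈ Finset.univ.erase (⟨j - 1, by omega⟩ : Fin j), ‖u ℓ‖) * ϱ) ^ n := by
  set last : Fin j := ⟨j - 1, by omega⟩
  have hanti : StrictAnti (‖u ·‖) := hudec
  have hmin (k : Fin j) : ‖u last‖ ≤ ‖u k‖ :=
    hanti.antitone (Fin.le_def.2 (by simp [last]; omega))
  have hbO : b =O[atTop] (ϱ ^ ·) :=
    .of_bound μ (.of_forall fun n => by rw [Real.norm_of_nonneg (by positivity)]; exact hb n)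
  obtain ⟨K, hK, hbound⟩ := bound_of_isBigO_nat_atTop <|
    isBigO_det_hankelMatrix_powerSum_add_sub hanti.injective.of_comp hmin
      (by rwa [abs_of_pos hϱpos]) hbO c
  refine ⟨(vandermonde u).det ^ 2 * (diagonal fun k => c k * u k).det, K, hK, fun n => ?_⟩
  have hrate : ‖∏ k, u k‖ * (ϱ / ‖u last‖) = (∏ k ∈ univ.erase last, ‖u k‖) * ϱ := by
    have hlast : ‖u last‖ ≠ 0 := (hϱpos.trans hϱlt).ne'
    rw [norm_prod, ← mul_prod_erase univ _ (mem_univ last)]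
    field_simp
  have hpos : 0 < (∏ k ∈ univ.erase last, ‖u k‖) * ϱ :=
    mul_pos (prod_pos fun k _ => (hϱpos.trans hϱlt).trans_le (hmin k)) hϱpos
  rw [hankel_eq_det_hankelMatrix, funext ha]
  have hn := hbound (x := n) (by rw [hrate]; exact (pow_pos hpos n).ne')
  rwa [hrate, Real.norm_of_nonneg (pow_pos hpos n).le] at hn
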